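/- arXiv:1611.01558 — 2 statements merged into one kernel-verified Lean document; each statement's English description precedes it below -/
import Mathlib

section
/- Let g₁,...,gₙ : ℝ → ℝ be differentiable functions with gᵢ(0) = 0 and |gᵢ'(x)| ≤ L < 1 for all x in a convex set X containing 0, and let β₁,...,βₙ ∈ [0,1) with maxᵢ βᵢ ≤ B < 1. Define h : ℝⁿ → ℝⁿ by h(x)ᵢ = (1-βᵢ)gᵢ(xᵢ) + (βᵢ/n)Σⱼ xⱼ. Then ‖h(x)‖_∞ ≤ m‖x‖_∞ for all x ∈ Xⁿ, where m = max over i of ((1-βᵢ)L + βᵢ) < 1. In particular x* = 0 is the unique fixed point of h in Xⁿ and iterates of h converge to 0 geometrically. -/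
/-- Soft-feedback map h(x)ᵢ = (1-βᵢ)gᵢ(xᵢ) + (βᵢ/n)Σⱼ xⱼ with
differentiable gᵢ, gᵢ(0)=0, |gᵢ'| ≤ L < 1 on a convex X ∋ 0, βᵢ ∈ [0,1).
Then ‖h x‖_∞ ≤ m ‖x‖_∞ on Xⁿ where m = maxᵢ((1-βᵢ)L + βᵢ) < 1; 0 is the unique
fixed point in Xⁿ and (for X invariant under h) iterates converge geometrically. -/
theorem stmt1 (n : ℕ) (hn : 0 < n) (g : Fin n → ℝ → ℝ) (X : Set ℝ)
    (hX : Convex ℝ X) (h0X : (0 : ℝ) ∈ X)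
    (hg : ∀ i, Differentiable ℝ (g i)) (hg0 : ∀ i, g i 0 = 0)
    (L : ℝ) (hL : L < 1) (hderiv : ∀ i, ∀ x ∈ X, |deriv (g i) x| ≤ L)
    (β : Fin n → ℝ) (B : ℝ) (hβ : ∀ i, β i ∈ Set.Ico (0 : ℝ) 1)
    (hB : ∀ i, β i ≤ B) (hB1 : B < 1)
    (h : (Fin n → ℝ) → (Fin n → ℝ))
    (hh : ∀ x i, h x i = (1 - β i) * g i (x i) + (β i / n) * ∑ j, x j)
    (m : ℝ) (hm : m = ⨆ i, ((1 - β i) * L + β i)) :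
    (∀ x : Fin n → ℝ, (∀ i, x i ∈ X) → ‖h x‖ ≤ m * ‖x‖) ∧
    m < 1 ∧
    (∀ x : Fin n → ℝ, (∀ i, x i ∈ X) → h x = x → x = 0) ∧
    ((∀ x : Fin n → ℝ, (∀ i, x i ∈ X) → ∀ i, h x i ∈ X) →
      ∀ x : Fin n → ℝ, (∀ i, x i ∈ X) →
        (∀ t : ℕ, ‖h^[t] x‖ ≤ m ^ t * ‖x‖) ∧
        Filter.Tendsto (fun t => h^[t] x) Filter.atTop (nhds 0)) := by
  have hne : Nonempty (Fin n) := ⟨⟨0, hn⟩⟩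
  have hL0 : 0 ≤ L := le_trans (abs_nonneg _) (hderiv ⟨0, hn⟩ 0 h0X)
  -- each coordinate factor
  set f : Fin n → ℝ := fun i => (1 - β i) * L + β i with hf
  have hfm : ∀ i, f i ≤ m := by
    intro i
    rw [hm]
    exact le_ciSup (Set.Finite.bddAbove (Set.finite_range _)) i
  have hf0 : ∀ i, 0 ≤ f i := by
    intro i
    have h1 : 0 ≤ 1 - β i := by linarith [(hβ i).2]
    have := (hβ i).1
    positivity
  have hm0 : 0 ≤ m := le_trans (hf0 ⟨0, hn⟩) (hfm ⟨0, hn⟩)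
  have hf1 : ∀ i, f i < 1 := by
    intro i
    have h1 : 0 < 1 - β i := by linarith [(hβ i).2]
    show (1 - β i) * L + β i < 1
    nlinarith [mul_lt_mul_of_pos_left hL h1]
  have hm1 : m < 1 := by
    obtain ⟨i₀, hi₀⟩ := Finite.exists_max f
    rw [hm]
    exact lt_of_le_of_lt (ciSup_le hi₀) (hf1 i₀)
  -- |g i y| ≤ L * |y| for y ∈ X
  have hgb : ∀ i, ∀ y ∈ X, |g i y| ≤ L * |y| := by
    intro i y hy
    have := hX.norm_image_sub_le_of_norm_deriv_le (f := g i)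
      (fun x _ => (hg i).differentiableAt) (fun x hx => hderiv i x hx) h0X hy
    simpa [hg0 i] using this
  -- main contraction bound
  have key : ∀ x : Fin n → ℝ, (∀ i, x i ∈ X) → ‖h x‖ ≤ m * ‖x‖ := by
    intro x hx
    rw [pi_norm_le_iff_of_nonneg (by positivity)]
    intro i
    rw [hh]
    have h1 : 0 ≤ 1 - β i := by linarith [(hβ i).2]
    have hb0 := (hβ i).1
    have hxi : |x i| ≤ ‖x‖ := norm_le_pi_norm x i
    have hsum : |∑ j, x j| ≤ n * ‖x‖ := by
      calc |∑ j, x j| ≤ ∑ j, |x j| := Finset.abs_sum_le_sum_abs _ _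
        _ ≤ ∑ _j : Fin n, ‖x‖ := Finset.sum_le_sum (fun j _ => norm_le_pi_norm x j)
        _ = n * ‖x‖ := by simp [mul_comm]
    have hnpos : (0:ℝ) < n := by exact_mod_cast hn
    calc ‖(1 - β i) * g i (x i) + (β i / n) * ∑ j, x j‖
        ≤ ‖(1 - β i) * g i (x i)‖ + ‖(β i / n) * ∑ j, x j‖ := norm_add_le _ _
      _ = (1 - β i) * |g i (x i)| + (β i / n) * |∑ j, x j| := by
          rw [Real.norm_eq_abs, Real.norm_eq_abs, abs_mul, abs_mul,
            abs_of_nonneg h1, abs_of_nonneg (div_nonneg hb0 hnpos.le)]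
      _ ≤ (1 - β i) * (L * |x i|) + (β i / n) * (n * ‖x‖) := by
          gcongr
          exact hgb i (x i) (hx i)
      _ ≤ (1 - β i) * (L * ‖x‖) + (β i / n) * (n * ‖x‖) := by
          gcongr
      _ = f i * ‖x‖ := by rw [hf]; field_simp
      _ ≤ m * ‖x‖ := mul_le_mul_of_nonneg_right (hfm i) (norm_nonneg _)
  refine ⟨key, hm1, ?_, ?_⟩
  · intro x hx hfix
    have h1 : ‖x‖ ≤ m * ‖x‖ := by have := key x hx; rwa [hfix] at this
    by_contra hx0
    have : 0 < ‖x‖ := norm_pos_iff.mpr hx0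
    nlinarith
  · intro hinv x hx
    have hmemiter : ∀ t, ∀ i, (h^[t] x) i ∈ X := by
      intro t
      induction t with
      | zero => simpa using hx
      | succ t ih =>
        rw [Function.iterate_succ_apply']
        exact hinv _ ih
    have hbound : ∀ t : ℕ, ‖h^[t] x‖ ≤ m ^ t * ‖x‖ := by
      intro t
      induction t with
      | zero => simp
      | succ t ih =>
        rw [Function.iterate_succ_apply']
        calc ‖h (h^[t] x)‖ ≤ m * ‖h^[t] x‖ := key _ (hmemiter t)
          _ ≤ m * (m ^ t * ‖x‖) := by gcongr
          _ = m ^ (t + 1) * ‖x‖ := by ring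
    refine ⟨hbound, ?_⟩
    rw [tendsto_zero_iff_norm_tendsto_zero]
    have hgeo : Filter.Tendsto (fun t : ℕ => m ^ t * ‖x‖) Filter.atTop (nhds 0) := by
      simpa using (tendsto_pow_atTop_nhds_zero_of_lt_one hm0 hm1).mul_const ‖x‖
    exact squeeze_zero (fun t => norm_nonneg _) hbound hgeo
end

section
/- Let m(β) = (1-β)g̃ + β with 0 ≤ g̃ < 1 and define f(β) = (1-β)²σ²/(1 - m(β)²) for β ∈ [0,1), which is the steady-state upper bound on the expected MSE. Then f(β) is continuous on [0,1), f(β) → 0 as β → 1⁻, and f is strictly decreasing in β; i.e., the steady-state noise floor is strictly reduced by increasing the degree of social influence. -/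
/-- With m(β) = (1-β)g̃ + β, 0 ≤ g̃ < 1, σ² > 0, the steady-state
noise floor f(β) = (1-β)²σ²/(1-m(β)²) is continuous on [0,1), tends to 0 as
β → 1⁻, and is strictly decreasing on [0,1). -/
theorem stmt15 (g σ2 : ℝ) (hg0 : 0 ≤ g) (hg1 : g < 1) (hσ : 0 < σ2)
    (f : ℝ → ℝ)
    (hf : ∀ β, f β = (1 - β) ^ 2 * σ2 / (1 - ((1 - β) * g + β) ^ 2)) :
    ContinuousOn f (Set.Ico (0 : ℝ) 1) ∧
    Filter.Tendsto f (nhdsWithin 1 (Set.Iio 1)) (nhds 0) ∧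
    StrictAntiOn f (Set.Ico (0 : ℝ) 1) := by
  have hD : ∀ β : ℝ, 0 ≤ β → β < 1 → 0 < 1 - ((1 - β) * g + β) ^ 2 := by
    intro β h0 h1
    nlinarith [mul_nonneg (sub_nonneg.2 h1.le) (sub_nonneg.2 hg1.le),
      mul_nonneg h0 (sub_nonneg.2 hg1.le)]
  refine ⟨?_, ?_, ?_⟩
  · -- Continuity
    have : ContinuousOn (fun β : ℝ => (1 - β) ^ 2 * σ2 / (1 - ((1 - β) * g + β) ^ 2))
        (Set.Ico (0 : ℝ) 1) := by
      apply ContinuousOn.div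
      · fun_prop
      · fun_prop
      · intro β hβ
        exact ne_of_gt (hD β hβ.1 hβ.2)
    exact this.congr (fun β _ => hf β)
  · -- Limit at 1⁻
    set g2 : ℝ → ℝ := fun β => (1 - β) * σ2 / ((1 - g) * (1 + β + (1 - β) * g)) with hg2
    have hcont : Filter.Tendsto g2 (nhdsWithin 1 (Set.Iio 1)) (nhds 0) := by
      have h0 : g2 1 = 0 := by simp [hg2]
      have : ContinuousAt g2 1 := by
        apply ContinuousAt.div
        · fun_prop
        · fun_prop
        · have : (0:ℝ) < (1 - g) * (1 + 1 + (1 - 1) * g) := by nlinarith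
          simpa using ne_of_gt this
      simpa [h0] using this.continuousWithinAt.tendsto
    apply hcont.congr'
    have h1 : ∀ᶠ β in nhdsWithin (1:ℝ) (Set.Iio 1), (0:ℝ) < β :=
      eventually_nhdsWithin_of_eventually_nhds (eventually_gt_nhds (by norm_num))
    have h2 : ∀ᶠ β in nhdsWithin (1:ℝ) (Set.Iio 1), β < 1 :=
      eventually_mem_nhdsWithin
    filter_upwards [h1, h2] with β hb0 hb1
    have hne : (1 : ℝ) - β ≠ 0 := by linarith
    have hd : 1 - ((1 - β) * g + β) ^ 2 = (1 - β) * ((1 - g) * (1 + β + (1 - β) * g)) := by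
      ring
    have hn : (1 - β) ^ 2 * σ2 = (1 - β) * ((1 - β) * σ2) := by ring
    rw [hg2]
    simp only [hf β, hd, hn, mul_div_mul_left _ _ hne]
  · -- Strict antitonicity
    intro a ha b hb hab
    rw [hf a, hf b]
    rw [div_lt_div_iff₀ (hD b hb.1 hb.2) (hD a ha.1 ha.2)]
    nlinarith [mul_pos (mul_pos (sub_pos.2 ha.2) (sub_pos.2 hb.2))
        (mul_pos (sub_pos.2 hg1) (sub_pos.2 hab)),
      mul_nonneg ha.1 (sub_nonneg.2 hg1.le), mul_nonneg hb.1 (sub_nonneg.2 hg1.le),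
      mul_pos (mul_pos (sub_pos.2 ha.2) (sub_pos.2 hb.2)) hσ]
end
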